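/- arXiv:2305.08964 — 2 statements merged into one kernel-verified Lean document; each statement's English description precedes it below -/
import Mathlib

section
/- Let $N > p > 1$, $p^\star = \frac{pN}{N-p}$, $\alpha > \frac{N}{N-p}$, and $a, b, S > 0$. Define $M(t) = a + b t^{\alpha - 1}$. Then $\inf_{t > 0} \frac{M(t)}{t^{\frac{p^\star}{p} - 1}} > S$ holds if and only if $a^{\frac{N(\alpha-1) - \alpha p}{p}}\, b > \left[ S \frac{N(\alpha-1) - p\alpha}{N(\alpha-1) - p\alpha + p} \right]^{\frac{(N-p)(\alpha-1)}{p}} \frac{p}{N(\alpha-1) - p\alpha}$. -/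
/-!
With `q = p / (N - p)` and `κ = α - 1` the hypotheses say `0 < q < κ`, and the quotient is
`(a + b t^κ) / t^q`. Writing it as the convex combination
`((κ - q)/κ) · A t^{-q} + (q/κ) · B t^{κ - q}` with `A = aκ/(κ - q)` and `B = bκ/q`, weighted
AM-GM bounds it below by `A^{(κ-q)/κ} B^{q/κ}`, since the powers of `t` cancel in the geometric
mean; the bound is attained where the two terms agree, i.e. at `t^κ = A / B`. Raising
`S < A^{(κ-q)/κ} B^{q/κ}` to the power `κ/q` gives the stated inequality.
-/

open Real Set

namespace PowQuot

variable {a b q κ : ℝ}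

/-- The minimum of `t ↦ (a + b t^κ) / t^q` over `t > 0`. -/
noncomputable def minValue (a b q κ : ℝ) : ℝ :=
  (a * κ / (κ - q)) ^ ((κ - q) / κ) * (b * κ / q) ^ (q / κ)

section
variable (ha : 0 < a) (hb : 0 < b) (hq : 0 < q) (hqκ : q < κ)
include ha hb hq hqκ

theorem minValue_le {t : ℝ} (ht : 0 < t) : minValue a b q κ ≤ (a + b * t ^ κ) / t ^ q := by
  have hκ : 0 < κ := hq.trans hqκ
  have hd : 0 < κ - q := sub_pos.2 hqκ
  have hA : 0 < a * κ / (κ - q) := by positivity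
  have hB : 0 < b * κ / q := by positivity
  have amgm := geom_mean_le_arith_mean2_weighted (w₁ := (κ - q) / κ) (w₂ := q / κ)
    (p₁ := a * κ / (κ - q) / t ^ q) (p₂ := b * κ / q * t ^ (κ - q))
    (by positivity) (by positivity) (by positivity) (by positivity) (by field_simp; ring)
  have geom : (a * κ / (κ - q) / t ^ q) ^ ((κ - q) / κ) * (b * κ / q * t ^ (κ - q)) ^ (q / κ)
      = minValue a b q κ := by
    rw [div_rpow hA.le (by positivity), mul_rpow hB.le (by positivity), ← rpow_mul ht.le,
      ← rpow_mul ht.le, show q * ((κ - q) / κ) = (κ - q) * (q / κ) by ring, minValue]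
    have : 0 < t ^ ((κ - q) * (q / κ)) := by positivity
    field_simp
  have arith : (κ - q) / κ * (a * κ / (κ - q) / t ^ q) + q / κ * (b * κ / q * t ^ (κ - q))
      = (a + b * t ^ κ) / t ^ q := by
    rw [rpow_sub ht]
    have : 0 < t ^ q := by positivity
    field_simp
  rwa [geom, arith] at amgm

theorem exists_eq_minValue : ∃ t > 0, (a + b * t ^ κ) / t ^ q = minValue a b q κ := by
  have hκ : 0 < κ := hq.trans hqκ
  have hd : 0 < κ - q := sub_pos.2 hqκ
  refine ⟨(a * q / (b * (κ - q))) ^ κ⁻¹, by positivity, ?_⟩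
  set t₀ := (a * q / (b * (κ - q))) ^ κ⁻¹
  have hr : 0 < a * q / (b * (κ - q)) := by positivity
  have ht₀κ : t₀ ^ κ = a * q / (b * (κ - q)) := rpow_inv_rpow hr.le hκ.ne'
  have ht₀q : t₀ ^ q = (a * q / (b * (κ - q))) ^ (q / κ) := by
    rw [← rpow_mul hr.le, inv_mul_eq_div]
  have hnum : a + b * (a * q / (b * (κ - q))) = a * κ / (κ - q) := by field_simp; ring
  -- `A = B t₀^κ`, hence `A = A^{(κ-q)/κ} (B t₀^κ)^{q/κ}`
  have hsplit : a * κ / (κ - q) = (a * κ / (κ - q)) ^ ((κ - q) / κ) *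
      ((b * κ / q) ^ (q / κ) * (a * q / (b * (κ - q))) ^ (q / κ)) := by
    rw [← mul_rpow (by positivity) hr.le,
      show b * κ / q * (a * q / (b * (κ - q))) = a * κ / (κ - q) by field_simp,
      ← rpow_add (by positivity), show (κ - q) / κ + q / κ = 1 by field_simp; ring, rpow_one]
  rw [ht₀κ, ht₀q, hnum, minValue, div_eq_iff (by positivity), mul_assoc, ← hsplit]

theorem isLeast_minValue :
    IsLeast ((fun t => (a + b * t ^ κ) / t ^ q) '' Ioi 0) (minValue a b q κ) :=
  ⟨exists_eq_minValue ha hb hq hqκ, by rintro _ ⟨t, ht, rfl⟩; exact minValue_le ha hb hq hqκ ht⟩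

theorem minValue_mul_rpow :
    (minValue a b q κ * ((κ - q) / κ)) ^ (κ / q) * (q / (κ - q)) = a ^ ((κ - q) / q) * b := by
  have hκ : 0 < κ := hq.trans hqκ
  have hd : 0 < κ - q := sub_pos.2 hqκ
  have hA : 0 < a * κ / (κ - q) := by positivity
  have hB : 0 < b * κ / q := by positivity
  have hD : 0 < (κ - q) / κ := by positivity
  calc (minValue a b q κ * ((κ - q) / κ)) ^ (κ / q) * (q / (κ - q))
      = (a * κ / (κ - q) * ((κ - q) / κ)) ^ ((κ - q) / q) *
          (b * κ / q * ((κ - q) / κ) * (q / (κ - q))) := by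
        rw [minValue, mul_rpow (by positivity) hD.le, mul_rpow (by positivity) (by positivity),
          ← rpow_mul hA.le, ← rpow_mul hB.le,
          show (κ - q) / κ * (κ / q) = (κ - q) / q by field_simp,
          show q / κ * (κ / q) = 1 by field_simp, rpow_one,
          show κ / q = (κ - q) / q + 1 by field_simp; ring, rpow_add hD, rpow_one,
          mul_rpow hA.le hD.le]
        ring
    _ = a ^ ((κ - q) / q) * b := by
        congr 1
        · congr 1; field_simp
        · field_simp

theorem lt_minValue_iff {S : ℝ} (hS : 0 ≤ S) :
    S < minValue a b q κ ↔
      (S * ((κ - q) / κ)) ^ (κ / q) * (q / (κ - q)) < a ^ ((κ - q) / q) * b := by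
  have hκ : 0 < κ := hq.trans hqκ
  have hd : 0 < κ - q := sub_pos.2 hqκ
  have hm : 0 < minValue a b q κ := by unfold minValue; positivity
  rw [← minValue_mul_rpow ha hb hq hqκ, mul_lt_mul_iff_of_pos_right (by positivity),
    rpow_lt_rpow_iff (by positivity) (by positivity) (by positivity),
    mul_lt_mul_iff_of_pos_right (by positivity)]

end

end PowQuot

theorem inf_M_quotient_gt_iff (N p α a b S : ℝ) (hp : 1 < p) (hN : p < N)
    (hα : N / (N - p) < α) (ha : 0 < a) (hb : 0 < b) (hS : 0 < S)
    (pstar : ℝ) (hpstar : pstar = p * N / (N - p))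
    (M : ℝ → ℝ) (hM : ∀ t, M t = a + b * t ^ (α - 1)) :
    S < sInf ((fun t => M t / t ^ (pstar / p - 1)) '' Set.Ioi (0 : ℝ)) ↔
      (S * ((N * (α - 1) - p * α) / (N * (α - 1) - p * α + p))) ^ ((N - p) * (α - 1) / p) *
          (p / (N * (α - 1) - p * α)) <
        a ^ ((N * (α - 1) - α * p) / p) * b := by
  have hNp : 0 < N - p := sub_pos.2 hN
  have hq : 0 < p / (N - p) := div_pos (by linarith) hNp
  have hqκ : p / (N - p) < α - 1 := by
    rw [show N / (N - p) = 1 + p / (N - p) by field_simp; ring] at hα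
    linarith
  have hquot : (fun t => M t / t ^ (pstar / p - 1)) =
      fun t => (a + b * t ^ (α - 1)) / t ^ (p / (N - p)) := by
    funext t
    rw [hM, hpstar, show p * N / (N - p) / p - 1 = p / (N - p) by field_simp; ring]
  rw [hquot, (PowQuot.isLeast_minValue ha hb hq hqκ).csInf_eq,
    PowQuot.lt_minValue_iff ha hb hq hqκ hS.le]
  have hfac : N * (α - 1) - p * α = (N - p) * (α - 1 - p / (N - p)) := by field_simp; ring
  rw [show N * (α - 1) - α * p = N * (α - 1) - p * α by ring, hfac,
    show (N - p) * (α - 1 - p / (N - p)) + p = (N - p) * (α - 1) by field_simp; ring,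
    mul_div_mul_left _ _ hNp.ne', div_div, div_div_eq_mul_div, div_div_eq_mul_div,
    mul_comm (α - 1), mul_comm _ (N - p)]
end

section
/- Let $N > p > 1$, $p^\star = \frac{pN}{N-p}$, $\alpha > \frac{N}{N-p}$, and $a, b, S > 0$. Define $\hat{M}(t) = at + \frac{b}{\alpha} t^{\alpha}$. Then $\inf_{t > 0} \frac{\hat{M}(t)}{t^{p^\star/p}} \geq \frac{p}{p^\star} S$ holds if and only if $a^{\frac{N(\alpha-1) - \alpha p}{p}}\, b \geq \left[ \frac{p}{p^\star} S \frac{N(\alpha-1) - p\alpha}{N(\alpha-1) - p\alpha + p} \right]^{\frac{(N-p)(\alpha-1)}{p}} \alpha \frac{p}{N(\alpha-1) - p\alpha}$. -/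
/-! With `q = N / (N - p)` the quotient is `a t^{-(q-1)} + (b/α) t^{α-q}`, a decreasing plus an
increasing power of `t`. Weighted AM–GM, with weights proportional to the opposite exponents, makes
the powers of `t` cancel; the resulting lower bound is attained where the two weighted terms
agree. Raising the comparison with this minimum to the power `(α - 1) / (q - 1)` gives the stated
inequality. -/

open Real Set

noncomputable def rpowNegAddRpowMin (a c u v : ℝ) : ℝ :=
  (a * (u + v) / v) ^ (v / (u + v)) * (c * (u + v) / u) ^ (u / (u + v))

section

variable {a c u v : ℝ}

theorem isLeast_rpowNegAddRpowMin (ha : 0 < a) (hc : 0 < c) (hu : 0 < u) (hv : 0 < v) :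
    IsLeast ((fun t => a * t ^ (-u) + c * t ^ v) '' Ioi 0) (rpowNegAddRpowMin a c u v) := by
  have huv : 0 < u + v := add_pos hu hv
  set P₁ : ℝ → ℝ := fun t => a * (u + v) / v * t ^ (-u)
  set P₂ : ℝ → ℝ := fun t => c * (u + v) / u * t ^ v
  have hP₁ (t : ℝ) (ht : 0 < t) : 0 < P₁ t := by simp only [P₁]; positivity
  have hP₂ (t : ℝ) (ht : 0 < t) : 0 < P₂ t := by simp only [P₂]; positivity
  have hweights : v / (u + v) + u / (u + v) = 1 := by field_simp; ring
  have hsum (t : ℝ) : a * t ^ (-u) + c * t ^ v = v / (u + v) * P₁ t + u / (u + v) * P₂ t := by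
    simp only [P₁, P₂]; field_simp
  have hprod (t : ℝ) (ht : 0 < t) :
      P₁ t ^ (v / (u + v)) * P₂ t ^ (u / (u + v)) = rpowNegAddRpowMin a c u v := by
    have hexp : -u * (v / (u + v)) + v * (u / (u + v)) = 0 := by field_simp; ring
    simp only [P₁, P₂]
    rw [mul_rpow (by positivity) (by positivity), mul_rpow (by positivity) (by positivity),
      ← rpow_mul ht.le, ← rpow_mul ht.le]
    calc _ = rpowNegAddRpowMin a c u v * t ^ (-u * (v / (u + v)) + v * (u / (u + v))) := by
          rw [rpowNegAddRpowMin, rpow_add ht]; ring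
      _ = _ := by rw [hexp, rpow_zero, mul_one]
  set t₀ : ℝ := (a * u / (c * v)) ^ (u + v)⁻¹
  have ht₀ : 0 < t₀ := by positivity
  have hbalance : P₁ t₀ = P₂ t₀ := by
    have hpow : t₀ ^ (u + v) = a * u / (c * v) := rpow_inv_rpow (by positivity) huv.ne'
    have hsplit : t₀ ^ v = t₀ ^ (u + v) * t₀ ^ (-u) := by rw [← rpow_add ht₀]; ring_nf
    simp only [P₁, P₂]
    rw [hsplit, hpow]
    field_simp
  refine ⟨⟨t₀, ht₀, ?_⟩, ?_⟩
  · dsimp only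
    rw [hsum, ← hprod t₀ ht₀, hbalance, ← rpow_add (hP₂ t₀ ht₀), hweights, rpow_one,
      ← add_mul, hweights, one_mul]
  · rintro _ ⟨t, ht : 0 < t, rfl⟩
    dsimp only
    rw [hsum, ← hprod t ht]
    exact geom_mean_le_arith_mean2_weighted (by positivity) (by positivity) (hP₁ t ht).le
      (hP₂ t ht).le hweights

theorem le_rpowNegAddRpowMin_iff {S : ℝ} (ha : 0 < a) (hc : 0 < c) (hu : 0 < u) (hv : 0 < v)
    (hS : 0 ≤ S) :
    S ≤ rpowNegAddRpowMin a c u v ↔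
      (S * (v / (u + v))) ^ ((u + v) / u) * (u / v) ≤ a ^ (v / u) * c := by
  have huv : 0 < u + v := add_pos hu hv
  set r : ℝ := ((u + v) / v) ^ (v / u)
  have hr : 0 < r := by positivity
  have hmin : rpowNegAddRpowMin a c u v ^ ((u + v) / u) = a ^ (v / u) * c * r * ((u + v) / u) := by
    rw [rpowNegAddRpowMin, mul_rpow (by positivity) (by positivity), ← rpow_mul (by positivity),
      ← rpow_mul (by positivity), show v / (u + v) * ((u + v) / u) = v / u by field_simp,
      show u / (u + v) * ((u + v) / u) = 1 by field_simp, rpow_one, mul_div_assoc,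
      mul_rpow ha.le (by positivity)]
    ring
  have hS' : (S * (v / (u + v))) ^ ((u + v) / u) * (u / v)
      = S ^ ((u + v) / u) * (r⁻¹ * (u / (u + v))) := by
    have hθ : (v / (u + v)) ^ ((u + v) / u) = r⁻¹ * (v / (u + v)) := by
      rw [show (u + v) / u = v / u + 1 by field_simp; ring, rpow_add_one (by positivity),
        ← inv_div, inv_rpow (by positivity)]
    rw [mul_rpow hS (by positivity), hθ]
    field_simp
  have hmin₀ : 0 ≤ rpowNegAddRpowMin a c u v := by rw [rpowNegAddRpowMin]; positivity
  rw [← rpow_le_rpow_iff hS hmin₀ (by positivity : 0 < (u + v) / u), hmin, hS',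
    ← le_div_iff₀ (by positivity)]
  field_simp

end

theorem inf_Mhat_quotient_ge_iff (N p α a b S : ℝ) (hp : 1 < p) (hN : p < N)
    (hα : N / (N - p) < α) (ha : 0 < a) (hb : 0 < b) (hS : 0 < S)
    (pstar : ℝ) (hpstar : pstar = p * N / (N - p))
    (Mhat : ℝ → ℝ) (hMhat : ∀ t, Mhat t = a * t + b / α * t ^ α) :
    p / pstar * S ≤ sInf ((fun t => Mhat t / t ^ (pstar / p)) '' Set.Ioi (0 : ℝ)) ↔
      (p / pstar * S * ((N * (α - 1) - p * α) / (N * (α - 1) - p * α + p))) ^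
            ((N - p) * (α - 1) / p) * (α * (p / (N * (α - 1) - p * α))) ≤
        a ^ ((N * (α - 1) - α * p) / p) * b := by
  have hNp : 0 < N - p := by linarith
  have hp₀ : 0 < p := by linarith
  have hpstar₀ : 0 < pstar := by rw [hpstar]; exact div_pos (by nlinarith) hNp
  have hα₀ : 0 < α := lt_trans (div_pos (by linarith) hNp) hα
  have hD : 0 < N * (α - 1) - p * α := by rw [div_lt_iff₀ hNp] at hα; linarith
  have hquot (t : ℝ) (ht : t ∈ Ioi 0) : Mhat t / t ^ (pstar / p) =
      a * t ^ (-(p / (N - p))) + b / α * t ^ ((N * (α - 1) - p * α) / (N - p)) := by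
    rw [hMhat, hpstar, show p * N / (N - p) / p = N / (N - p) by field_simp,
      show -(p / (N - p)) = 1 - N / (N - p) by field_simp; ring,
      show (N * (α - 1) - p * α) / (N - p) = α - N / (N - p) by field_simp; ring,
      rpow_sub ht, rpow_sub ht, rpow_one]
    field_simp
  have hu := div_pos hp₀ hNp
  have hv := div_pos hD hNp
  rw [image_congr hquot, (isLeast_rpowNegAddRpowMin ha (div_pos hb hα₀) hu hv).csInf_eq,
    le_rpowNegAddRpowMin_iff ha (div_pos hb hα₀) hu hv (by positivity),
    show p / (N - p) + (N * (α - 1) - p * α) / (N - p) = (N - p) * (α - 1) / (N - p) by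
      field_simp; ring,
    show (N - p) * (α - 1) / (N - p) / (p / (N - p)) = (N - p) * (α - 1) / p by field_simp,
    show (N * (α - 1) - p * α) / (N - p) / ((N - p) * (α - 1) / (N - p)) =
        (N * (α - 1) - p * α) / (N * (α - 1) - p * α + p) by
      rw [show N * (α - 1) - p * α + p = (N - p) * (α - 1) by ring]; field_simp,
    show (N * (α - 1) - p * α) / (N - p) / (p / (N - p)) = (N * (α - 1) - α * p) / p by
      field_simp,
    show p / (N - p) / ((N * (α - 1) - p * α) / (N - p)) = p / (N * (α - 1) - p * α) by
      field_simp]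
  field_simp
end
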